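/- The directional delta method: let T_n be random variables in ℝ^d with √n·(T_n − θ) converging in distribution to a random variable Z, and let g: ℝ^d → ℝ be Lipschitz and Hadamard directionally differentiable at θ with continuous directional derivative g'_θ. Then √n·(g(T_n) − g(θ)) converges in distribution to g'_θ(Z). -/

import Mathlib

/-!
Write `Xₙ = √n (Tₙ - θ)` and `φₙ x = √n (g (θ + x / √n) - g θ)`, so that
`√n (g Tₙ - g θ) = φₙ Xₙ`. Hadamard directional differentiability says exactly that
`φₙ xₙ → g' x` whenever `xₙ → x`, i.e. `φₙ → g'` locally uniformly. A sequence converging in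
distribution is tight, so `Xₙ` stays in a fixed compact set with probability close to one,
on which `φₙ - g'` is uniformly small: `φₙ Xₙ - g' Xₙ → 0` in probability. Since
`g' Xₙ → g' Z` in distribution by the continuous mapping theorem, so does `φₙ Xₙ`.
-/

open Filter Topology MeasureTheory

/-- Convergence in distribution of a sequence of random variables, characterized via
integrals of bounded continuous test functions. -/
def ConvInDist {Ω E : Type*} [MeasurableSpace Ω] [TopologicalSpace E]
    (μ : Measure Ω) (X : ℕ → Ω → E) (Y : Ω → E) : Prop :=
  ∀ f : BoundedContinuousFunction E ℝ,
    Tendsto (fun n => ∫ ω, f (X n ω) ∂μ) atTop (𝓝 (∫ ω, f (Y ω) ∂μ))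

section Hadamard

variable {E : Type*} [NormedAddCommGroup E] [NormedSpace ℝ E]

def HasHadamardDirDerivAt (g g' : E → ℝ) (θ : E) : Prop :=
  ∀ v, Tendsto (fun p : ℝ × E => (g (θ + p.1 • p.2) - g θ) / p.1) (𝓝[>] 0 ×ˢ 𝓝 v) (𝓝 (g' v))

variable {g g' : E → ℝ} {θ : E}

theorem hasHadamardDirDerivAt_of_seq
    (hg : ∀ (h : E) (t : ℕ → ℝ) (hn : ℕ → E), (∀ n, 0 < t n) → Tendsto t atTop (𝓝 0) →
      Tendsto hn atTop (𝓝 h) →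
      Tendsto (fun n => (g (θ + t n • hn n) - g θ) / t n) atTop (𝓝 (g' h))) :
    HasHadamardDirDerivAt g g' θ := by
  intro v
  rw [tendsto_iff_seq_tendsto]
  intro u hu
  have ht : Tendsto (fun n => (u n).1) atTop (𝓝[>] 0) := tendsto_fst.comp hu
  have hv : Tendsto (fun n => (u n).2) atTop (𝓝 v) := tendsto_snd.comp hu
  -- `(u n).1` is only eventually positive, while `hg` wants every step positive: shift by `N`.
  obtain ⟨N, hN⟩ := (tendsto_nhdsWithin_iff.1 ht).2.exists_forall_of_atTop
  rw [← tendsto_add_atTop_iff_nat N]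
  exact hg v _ _ (fun n => hN (n + N) (Nat.le_add_left N n))
    ((tendsto_add_atTop_iff_nat N).2 (tendsto_nhdsWithin_iff.1 ht).1)
    ((tendsto_add_atTop_iff_nat N).2 hv)

noncomputable def rescaledIncrement (g : E → ℝ) (θ : E) (n : ℕ) (x : E) : ℝ :=
  √n * (g (θ + (√n)⁻¹ • x) - g θ)

theorem continuous_rescaledIncrement (hg : Continuous g) (n : ℕ) :
    Continuous (rescaledIncrement g θ n) := by
  unfold rescaledIncrement
  fun_prop

theorem rescaledIncrement_sqrt_smul_sub (n : ℕ) (y : E) :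
    rescaledIncrement g θ n (√n • (y - θ)) = √n * (g y - g θ) := by
  rcases eq_or_ne (√n : ℝ) 0 with h | h
  · simp [rescaledIncrement, h]
  · simp [rescaledIncrement, smul_smul, inv_mul_cancel₀ h]

theorem HasHadamardDirDerivAt.tendstoLocallyUniformly_rescaledIncrement
    (hg : HasHadamardDirDerivAt g g' θ) (hg' : Continuous g') :
    TendstoLocallyUniformly (rescaledIncrement g θ) g' atTop := by
  have hscale : Tendsto (fun n : ℕ => (√n)⁻¹) atTop (𝓝[>] 0) :=
    tendsto_inv_atTop_nhdsGT_zero.comp (Real.tendsto_sqrt_atTop.comp tendsto_natCast_atTop_atTop)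
  rw [tendstoLocallyUniformly_iff_forall_tendsto]
  intro v
  have hlim : Tendsto (fun p : ℕ × E => rescaledIncrement g θ p.1 p.2) (atTop ×ˢ 𝓝 v)
      (𝓝 (g' v)) := by
    refine ((hg v).comp (hscale.prodMap tendsto_id)).congr fun p => ?_
    simp [rescaledIncrement, div_inv_eq_mul, mul_comm]
  exact (((hg'.tendsto v).comp tendsto_snd).prodMk_nhds hlim).mono_right (nhds_le_uniformity _)

end Hadamard

namespace MeasureTheory

variable {Ω Ω' E G : Type*} {mΩ : MeasurableSpace Ω} {mΩ' : MeasurableSpace Ω'}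
  {μ : Measure Ω} {μ' : Measure Ω'} {mE : MeasurableSpace E} {X : ℕ → Ω → E} {Z : Ω' → E}

theorem convInDist_iff_tendstoInDistribution [TopologicalSpace E] [OpensMeasurableSpace E]
    [IsProbabilityMeasure μ] {Y : Ω → E} (hX : ∀ n, AEMeasurable (X n) μ)
    (hY : AEMeasurable Y μ) :
    ConvInDist μ X Y ↔ TendstoInDistribution X atTop Y (fun _ => μ) μ := by
  have hint : ∀ (W : Ω → E) (hW : AEMeasurable W μ) (f : BoundedContinuousFunction E ℝ),
      ∫ x, f x ∂(μ.map W) = ∫ ω, f (W ω) ∂μ := fun W hW f =>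
    integral_map hW f.continuous.aestronglyMeasurable
  refine ⟨fun h => ⟨hX, hY, ?_⟩, fun h f => ?_⟩
  · refine ProbabilityMeasure.tendsto_iff_forall_integral_tendsto.2 fun f => ?_
    simpa only [ProbabilityMeasure.coe_mk, hint _ (hX _), hint _ hY] using h f
  · simpa only [ProbabilityMeasure.coe_mk, hint _ (hX _), hint _ hY] using
      ProbabilityMeasure.tendsto_iff_forall_integral_tendsto.1 h.tendsto f

theorem TendstoInDistribution.isTightMeasureSet_range [PseudoMetricSpace E]
    [SecondCountableTopology E] [CompleteSpace E] [BorelSpace E]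
    [IsProbabilityMeasure μ] [IsProbabilityMeasure μ']
    (h : TendstoInDistribution X atTop Z (fun _ => μ) μ') :
    IsTightMeasureSet (Set.range fun n => μ.map (X n)) := by
  have hcompact := h.tendsto.isCompact_insert_range
  refine (isTightMeasureSet_of_isCompact_closure
    (hcompact.isClosed.closure_eq ▸ hcompact)).subset ?_
  rintro _ ⟨n, rfl⟩
  exact ⟨_, Set.mem_insert_of_mem _ ⟨n, rfl⟩, rfl⟩

theorem tendstoInMeasure_comp_sub_of_tendstoLocallyUniformly [TopologicalSpace E]
    [SeminormedAddCommGroup G] {F : ℕ → E → G} {f : E → G}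
    (hX : ∀ n, AEMeasurable (X n) μ) (htight : IsTightMeasureSet (Set.range fun n => μ.map (X n)))
    (hF : TendstoLocallyUniformly F f atTop) :
    TendstoInMeasure μ (fun n ω => F n (X n ω) - f (X n ω)) atTop 0 := by
  refine tendstoInMeasure_iff_norm.2 fun ε hε => ?_
  rw [ENNReal.tendsto_atTop_zero]
  intro η hη
  obtain ⟨K, hK, hKη⟩ := isTightMeasureSet_iff_exists_isCompact_measure_compl_le.1 htight η hη
  have hunif : TendstoUniformlyOn F f atTop K :=
    (tendstoLocallyUniformlyOn_iff_tendstoUniformlyOn_of_compact hK).1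
      hF.tendstoLocallyUniformlyOn
  obtain ⟨N, hN⟩ := eventually_atTop.1 (Metric.tendstoUniformlyOn_iff.1 hunif ε hε)
  refine ⟨N, fun n hn => ?_⟩
  calc μ {ω | ε ≤ ‖F n (X n ω) - f (X n ω) - (0 : Ω → G) ω‖} ≤ μ (X n ⁻¹' Kᶜ) := by
        refine measure_mono fun ω hω hωK => ?_
        rw [Set.mem_ofPred_eq, Pi.zero_apply, sub_zero, ← dist_eq_norm, dist_comm] at hω
        exact hω.not_gt (hN n hn _ hωK)
    _ ≤ μ.map (X n) Kᶜ := Measure.le_map_apply (hX n) _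
    _ ≤ η := hKη _ ⟨n, rfl⟩

theorem TendstoInDistribution.comp_of_tendstoLocallyUniformly [PseudoMetricSpace E]
    [SecondCountableTopology E] [CompleteSpace E] [BorelSpace E]
    [SeminormedAddCommGroup G] [SecondCountableTopology G] [MeasurableSpace G] [BorelSpace G]
    [IsProbabilityMeasure μ] [IsProbabilityMeasure μ']
    {F : ℕ → E → G} {f : E → G}
    (h : TendstoInDistribution X atTop Z (fun _ => μ) μ') (hF : TendstoLocallyUniformly F f atTop)
    (hf : Continuous f) (hFm : ∀ n, Measurable (F n)) :
    TendstoInDistribution (fun n ω => F n (X n ω)) atTop (f ∘ Z) (fun _ => μ) μ' :=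
  tendstoInDistribution_of_tendstoInMeasure_sub _ _ (h.continuous_comp hf)
    (tendstoInMeasure_comp_sub_of_tendstoLocallyUniformly h.forall_aemeasurable
      h.isTightMeasureSet_range hF)
    fun n => (hFm n).comp_aemeasurable (h.forall_aemeasurable n)

end MeasureTheory

/-- The directional delta method: if `√n (T_n − θ)` converges in distribution to `Z`,
and `g : ℝ^d → ℝ` is Lipschitz and Hadamard directionally differentiable at `θ` with
continuous directional derivative `g'`, then `√n (g(T_n) − g(θ))` converges in
distribution to `g'(Z)`. -/
theorem directional_delta_method {d : ℕ} {Ω : Type*} [MeasurableSpace Ω]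
    (μ : Measure Ω) [IsProbabilityMeasure μ]
    (T : ℕ → Ω → (Fin d → ℝ)) (Z : Ω → (Fin d → ℝ)) (θ : Fin d → ℝ)
    (g : (Fin d → ℝ) → ℝ) (g' : (Fin d → ℝ) → ℝ) (Kg : NNReal)
    (hmeas : ∀ n, Measurable (T n)) (hZmeas : Measurable Z)
    (hLip : LipschitzWith Kg g)
    (hg'cont : Continuous g')
    (hHadamard : ∀ (h : Fin d → ℝ) (t : ℕ → ℝ) (hn : ℕ → (Fin d → ℝ)),
      (∀ n, 0 < t n) → Tendsto t atTop (𝓝 0) → Tendsto hn atTop (𝓝 h) →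
      Tendsto (fun n => (g (θ + t n • hn n) - g θ) / t n) atTop (𝓝 (g' h)))
    (hconv : ConvInDist μ (fun n ω => Real.sqrt n • (T n ω - θ)) Z) :
    ConvInDist μ (fun n ω => Real.sqrt n * (g (T n ω) - g θ)) (fun ω => g' (Z ω)) := by
  have hX : ∀ n : ℕ, Measurable fun ω => √n • (T n ω - θ) := fun n =>
    (measurable_const_smul _).comp ((hmeas n).sub_const θ)
  have hY : ∀ n : ℕ, Measurable fun ω => √n * (g (T n ω) - g θ) := fun n =>
    measurable_const.mul ((hLip.continuous.measurable.comp (hmeas n)).sub_const _)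
  have hXZ := (convInDist_iff_tendstoInDistribution (fun n => (hX n).aemeasurable)
    hZmeas.aemeasurable).1 hconv
  have hlim := hXZ.comp_of_tendstoLocallyUniformly
    ((hasHadamardDirDerivAt_of_seq hHadamard).tendstoLocallyUniformly_rescaledIncrement hg'cont)
    hg'cont fun n => (continuous_rescaledIncrement hLip.continuous n).measurable
  simp only [rescaledIncrement_sqrt_smul_sub] at hlim
  exact (convInDist_iff_tendstoInDistribution (fun n => (hY n).aemeasurable)
    (hg'cont.measurable.comp hZmeas).aemeasurable).2 hlim
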